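/- Any spatial spectrum access game satisfying the congestion property whose directed interference graph is a directed forest has a pure Nash equilibrium. Here the graph is a directed forest if the undirected graph obtained by ignoring edge directions (i adjacent to j iff i ∈ 𝒩_j or j ∈ 𝒩_i) is acyclic, i.e., a disjoint union of trees. -/

import Mathlib

/-- The undirected graph obtained from the directed interference graph by ignoring
the directions of edges: `i` is adjacent to `j` iff `i ∈ 𝒩 j` or `j ∈ 𝒩 i`. -/
def stmt5UndirGraph {N : ℕ} (𝒩 : Fin N → Finset (Fin N)) : SimpleGraph (Fin N) where
  Adj i j := i ≠ j ∧ (i ∈ 𝒩 j ∨ j ∈ 𝒩 i)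
  symm := ⟨fun _ _ h => ⟨h.1.symm, h.2.symm⟩⟩
  loopless := ⟨fun _ h => h.1 rfl⟩

/-! Induction on the number of edges. A leaf `v` of the forest has a single neighbour `u`.
If some channel `c` is dominant for `v` (its worst payoff on `c` beats its best payoff anywhere
else), `v` is frozen on `c` and becomes a fixed interferer of `u` in a smaller game. Otherwise `v`
always prefers some channel other than `u`'s; then it interferes with nobody, so an equilibrium of
the game without `v`, completed by that best reply of `v`, is an equilibrium. -/

open Finset Function SimpleGraph

theorem SimpleGraph.IsAcyclic.exists_adj_forall_adj_eq {V : Type*} [Finite V] {G : SimpleGraph V}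
    (hG : G.IsAcyclic) {x y : V} (hxy : G.Adj x y) :
    ∃ v u, G.Adj v u ∧ ∀ w, G.Adj v w → w = u := by
  have : Nonempty V := ⟨x⟩
  obtain ⟨v, _, p, hp, hmax⟩ := Walk.exists_isPath_forall_isPath_length_le_length G
  have hnil : ¬p.Nil := by
    have := hmax x y hxy.toWalk (Walk.IsPath.of_adj hxy)
    rw [← Walk.length_eq_zero_iff]
    simp at this
    omega
  -- A neighbour of the start of a longest path lies on it, so it is the second vertex.
  refine ⟨v, p.snd, p.adj_snd hnil, fun w hvw => hG.eq_snd_of_adj_start hp hvw ?_⟩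
  by_contra hw
  have := hmax _ _ (p.cons hvw.symm) (hp.cons hw)
  simp at this

namespace SpectrumAccess

variable {ι κ : Type*}

def IsCongested (f : ι → κ → Finset ι → ℝ) (𝒩 : ι → Finset ι) : Prop :=
  ∀ n m ⦃S T⦄, S ⊆ T → T ⊆ 𝒩 n → f n m T ≤ f n m S

variable {f : ι → κ → Finset ι → ℝ} {𝒩 : ι → Finset ι}

lemma IsCongested.mono {𝒩' : ι → Finset ι} (hf : IsCongested f 𝒩) (h : ∀ n, 𝒩' n ⊆ 𝒩 n) :
    IsCongested f 𝒩' :=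
  fun n m _ _ hST hT => hf n m hST (hT.trans (h n))

lemma exists_leaf [Finite ι] (hself : ∀ n, n ∉ 𝒩 n) (hforest : (fromRel (· ∈ 𝒩 ·)).IsAcyclic)
    {i n : ι} (hi : i ∈ 𝒩 n) :
    ∃ v u, (u ∈ 𝒩 v ∨ v ∈ 𝒩 u) ∧ (∀ j ∈ 𝒩 v, j = u) ∧ ∀ j, v ∈ 𝒩 j → j = u := by
  obtain ⟨v, u, ⟨-, hvu⟩, hleaf⟩ :=
    hforest.exists_adj_forall_adj_eq ⟨ne_of_mem_of_not_mem hi (hself n), .inl hi⟩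
  exact ⟨v, u, hvu.symm, fun j hj => hleaf j ⟨(ne_of_mem_of_not_mem hj (hself v)).symm, .inr hj⟩,
    fun j hj => hleaf j ⟨ne_of_mem_of_not_mem hj (hself j), .inl hj⟩⟩

def IsDominantChannel (f : ι → κ → Finset ι → ℝ) (𝒩 : ι → Finset ι) (v : ι) (c : κ) : Prop :=
  ∀ m ≠ c, f v m ∅ ≤ f v c (𝒩 v)

variable [DecidableEq κ]

-- The paper's `𝒩ₙ^{aₙ}(a)`.
def sameChannel (𝒩 : ι → Finset ι) (a : ι → κ) (n : ι) : Finset ι :=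
  (𝒩 n).filter fun i => a i = a n

-- `f n m S` stands for `θₘ Bₘⁿ gₙ(S)`.
def payoff (f : ι → κ → Finset ι → ℝ) (𝒩 : ι → Finset ι) (a : ι → κ) (n : ι) : ℝ :=
  f n (a n) (sameChannel 𝒩 a n)

lemma sameChannel_subset (a : ι → κ) (n : ι) : sameChannel 𝒩 a n ⊆ 𝒩 n := filter_subset _ _

lemma IsCongested.payoff_le (hf : IsCongested f 𝒩) {a : ι → κ} {n : ι} {S : Finset ι}
    (hS : S ⊆ sameChannel 𝒩 a n) : payoff f 𝒩 a n ≤ f n (a n) S :=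
  hf n (a n) hS (sameChannel_subset a n)

variable [DecidableEq ι]

def IsNashEquilibrium (f : ι → κ → Finset ι → ℝ) (𝒩 : ι → Finset ι) (a : ι → κ) : Prop :=
  ∀ n m, payoff f 𝒩 (update a n m) n ≤ payoff f 𝒩 a n

lemma payoff_update_of_notMem {v n : ι} (hv : v ∉ 𝒩 n) (hvn : v ≠ n) (a : ι → κ) (c : κ) :
    payoff f 𝒩 (update a v c) n = payoff f 𝒩 a n := by
  have hsame : sameChannel 𝒩 (update a v c) n = sameChannel 𝒩 a n :=
    filter_congr fun i hi => by
      rw [update_of_ne (ne_of_mem_of_not_mem hi hv), update_of_ne hvn.symm]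
  rw [payoff, payoff, hsame, update_of_ne hvn.symm]

lemma exists_isNashEquilibrium_of_forall_eq_empty [Finite κ] [Nonempty κ]
    (h : ∀ n, 𝒩 n = ∅) : ∃ a, IsNashEquilibrium f 𝒩 a := by
  choose a ha using fun n => Finite.exists_max (f n · ∅)
  refine ⟨a, fun n m => ?_⟩
  simp only [payoff, sameChannel, h, filter_empty, update_self]
  exact ha n m

def isolate (𝒩 : ι → Finset ι) (v n : ι) : Finset ι := if n = v then ∅ else (𝒩 n).erase v

variable {v : ι}

lemma isolate_of_ne {n : ι} (hn : n ≠ v) : isolate 𝒩 v n = (𝒩 n).erase v := if_neg hn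

lemma isolate_subset (n : ι) : isolate 𝒩 v n ⊆ 𝒩 n := by
  unfold isolate
  split_ifs
  · exact empty_subset _
  · exact erase_subset _ _

lemma notMem_isolate (n : ι) : v ∉ isolate 𝒩 v n := by
  unfold isolate
  split_ifs
  · exact notMem_empty v
  · exact notMem_erase v _

lemma fromRel_isolate_le : fromRel (· ∈ isolate 𝒩 v ·) ≤ fromRel (· ∈ 𝒩 ·) :=
  fun _ _ ⟨hne, h⟩ => ⟨hne, h.imp (isolate_subset _ ·) (isolate_subset _ ·)⟩

lemma sum_card_isolate_lt [Fintype ι] {u : ι} (h : u ∈ 𝒩 v ∨ v ∈ 𝒩 u) :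
    ∑ n, #(isolate 𝒩 v n) < ∑ n, #(𝒩 n) := by
  refine sum_lt_sum (fun n _ => card_le_card (isolate_subset n)) ?_
  rcases h with h | h
  · refine ⟨v, mem_univ _, ?_⟩
    rw [isolate, if_pos rfl, card_empty]
    exact card_pos.mpr ⟨u, h⟩
  · exact ⟨u, mem_univ _, card_lt_card ⟨isolate_subset u, fun hsub => notMem_isolate u (hsub h)⟩⟩

lemma sameChannel_eq_ite {n : ι} (hn : n ≠ v) (a : ι → κ) :
    sameChannel 𝒩 a n = if v ∈ 𝒩 n ∧ a v = a n then insert v (sameChannel (isolate 𝒩 v) a n)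
      else sameChannel (isolate 𝒩 v) a n := by
  simp only [sameChannel, isolate_of_ne hn, filter_erase]
  split_ifs with h
  · rw [insert_erase (mem_filter.mpr h)]
  · rw [erase_eq_of_notMem (fun hv => h (mem_filter.mp hv))]

variable {a : ι → κ}

lemma IsNashEquilibrium.update_of_isolate {f' : ι → κ → Finset ι → ℝ} {c : κ}
    (ha : IsNashEquilibrium f' (isolate 𝒩 v) a)
    (hv : ∀ m, payoff f 𝒩 (update a v m) v ≤ payoff f 𝒩 (update a v c) v)
    (hle : ∀ n ≠ v, ∀ b : ι → κ, b v = c → payoff f 𝒩 b n ≤ payoff f' (isolate 𝒩 v) b n)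
    (hge : ∀ n ≠ v, payoff f' (isolate 𝒩 v) (update a v c) n ≤ payoff f 𝒩 (update a v c) n) :
    IsNashEquilibrium f 𝒩 (update a v c) := by
  intro n m
  rcases eq_or_ne n v with rfl | hn
  · simpa only [update_idem] using hv m
  have hlocal (b : ι → κ) :
      payoff f' (isolate 𝒩 v) (update b v c) n = payoff f' (isolate 𝒩 v) b n :=
    payoff_update_of_notMem (notMem_isolate n) hn.symm b c
  calc payoff f 𝒩 (update (update a v c) n m) n
      ≤ payoff f' (isolate 𝒩 v) (update (update a v c) n m) n :=
        hle n hn _ (by rw [update_of_ne hn.symm, update_self])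
    _ = payoff f' (isolate 𝒩 v) (update a n m) n := by rw [update_comm hn.symm, hlocal]
    _ ≤ payoff f' (isolate 𝒩 v) a n := ha n m
    _ = payoff f' (isolate 𝒩 v) (update a v c) n := (hlocal a).symm
    _ ≤ payoff f 𝒩 (update a v c) n := hge n hn

/-- Payoffs of the smaller game in which `v` stays on channel `c` for good: it is no longer a
player, but a permanent interferer on `c`. -/
def freeze (f : ι → κ → Finset ι → ℝ) (𝒩 : ι → Finset ι) (v : ι) (c : κ) :
    ι → κ → Finset ι → ℝ :=
  fun n m S => f n m (if v ∈ 𝒩 n ∧ c = m then insert v S else S)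

lemma IsCongested.freeze (hf : IsCongested f 𝒩) (v : ι) (c : κ) :
    IsCongested (freeze f 𝒩 v c) (isolate 𝒩 v) := by
  intro n m S T hST hT
  unfold SpectrumAccess.freeze
  split_ifs with h
  · exact hf n m (insert_subset_insert v hST) (insert_subset h.1 (hT.trans (isolate_subset n)))
  · exact hf n m hST (hT.trans (isolate_subset n))

lemma payoff_freeze {n : ι} (hn : n ≠ v) {c : κ} {b : ι → κ} (hb : b v = c) :
    payoff (freeze f 𝒩 v c) (isolate 𝒩 v) b n = payoff f 𝒩 b n := by
  rw [payoff, payoff, sameChannel_eq_ite (𝒩 := 𝒩) hn, freeze, hb]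

lemma IsCongested.payoff_update_le_of_dominant (hf : IsCongested f 𝒩) {c : κ}
    (hc : IsDominantChannel f 𝒩 v c) (ha : a v = c) (m : κ) :
    payoff f 𝒩 (update a v m) v ≤ payoff f 𝒩 a v := by
  rcases eq_or_ne m c with rfl | hm
  · rw [← ha, update_eq_self]
  calc payoff f 𝒩 (update a v m) v ≤ f v m ∅ := by
        simpa only [update_self] using hf.payoff_le (a := update a v m) (n := v) (empty_subset _)
    _ ≤ f v c (𝒩 v) := hc m hm
    _ ≤ payoff f 𝒩 a v := by
        rw [payoff, ha]
        exact hf v c (sameChannel_subset a v) subset_rfl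

lemma IsNashEquilibrium.update_of_dominant (hf : IsCongested f 𝒩) {c : κ}
    (hc : IsDominantChannel f 𝒩 v c)
    (ha : IsNashEquilibrium (freeze f 𝒩 v c) (isolate 𝒩 v) a) :
    IsNashEquilibrium f 𝒩 (update a v c) :=
  ha.update_of_isolate
    (fun m => by simpa only [update_idem] using
      hf.payoff_update_le_of_dominant hc (update_self v c a) m)
    (fun _ hn _ hb => (payoff_freeze hn hb).ge)
    (fun _ hn => (payoff_freeze hn (update_self v c a)).le)

/-- Without a dominant channel, `v` is best off on some channel other than the channel `k` of its
neighbours; there it interferes with nobody. -/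
lemma IsNashEquilibrium.exists_update_of_not_dominant [Fintype κ] (hf : IsCongested f 𝒩)
    (hnd : ¬ ∃ c, IsDominantChannel f 𝒩 v c) (hv : v ∉ 𝒩 v) {k : κ}
    (hin : ∀ i ∈ 𝒩 v, a i = k) (hout : ∀ n, v ∈ 𝒩 n → a n = k)
    (ha : IsNashEquilibrium f (isolate 𝒩 v) a) : ∃ β, IsNashEquilibrium f 𝒩 (update a v β) := by
  unfold IsDominantChannel at hnd
  push Not at hnd
  obtain ⟨m₀, hm₀k, hm₀⟩ := hnd k
  obtain ⟨β, hβ, hmax⟩ := exists_max_image (univ.erase k) (f v · ∅) ⟨m₀, by simp [hm₀k]⟩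
  have hβk : k ≠ β := fun h => (mem_erase.mp hβ).1 h.symm
  have hsame (m : κ) : sameChannel 𝒩 (update a v m) v = if k = m then 𝒩 v else ∅ := by
    rw [← filter_const]
    refine filter_congr fun i hi => ?_
    rw [update_of_ne (ne_of_mem_of_not_mem hi hv), update_self, hin i hi]
  refine ⟨β, ha.update_of_isolate (fun m => ?_) (fun n _ b _ => ?_) (fun n hn => ?_)⟩
  · rw [payoff, payoff, hsame, hsame, update_self, update_self, if_neg hβk]
    split_ifs with hkm
    · exact hkm ▸ hm₀.le.trans (hmax m₀ (by simp [hm₀k]))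
    · exact hmax m (by simp [Ne.symm hkm])
  · exact hf.payoff_le (filter_subset_filter _ (isolate_subset n))
  · rw [payoff, payoff, sameChannel_eq_ite (𝒩 := 𝒩) hn, if_neg]
    rintro ⟨hvn, hch⟩
    rw [update_self, update_of_ne hn, hout n hvn] at hch
    exact hβk hch.symm

theorem exists_isNashEquilibrium [Fintype ι] [Fintype κ] [Nonempty κ] (hself : ∀ n, n ∉ 𝒩 n)
    (hforest : (fromRel (· ∈ 𝒩 ·)).IsAcyclic) (hf : IsCongested f 𝒩) :
    ∃ a, IsNashEquilibrium f 𝒩 a := by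
  induction h : ∑ n, #(𝒩 n) using Nat.strong_induction_on generalizing f 𝒩 with
  | _ s ih =>
  subst h
  by_cases hempty : ∀ n, 𝒩 n = ∅
  · exact exists_isNashEquilibrium_of_forall_eq_empty hempty
  obtain ⟨n, i, hi⟩ : ∃ n i, i ∈ 𝒩 n := by
    push Not at hempty
    exact hempty
  obtain ⟨v, u, hvu, hin, hout⟩ := exists_leaf hself hforest hi
  have hself' (n : ι) : n ∉ isolate 𝒩 v n := fun h => hself n (isolate_subset n h)
  have hforest' := hforest.anti (fromRel_isolate_le (v := v))
  have hlt := sum_card_isolate_lt hvu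
  by_cases hdom : ∃ c, IsDominantChannel f 𝒩 v c
  · obtain ⟨c, hc⟩ := hdom
    obtain ⟨a, ha⟩ := ih _ hlt hself' hforest' (hf.freeze v c) rfl
    exact ⟨_, ha.update_of_dominant hf hc⟩
  · obtain ⟨a, ha⟩ := ih _ hlt hself' hforest' (hf.mono isolate_subset) rfl
    obtain ⟨β, hβ⟩ := ha.exists_update_of_not_dominant hf hdom (hself v) (k := a u)
      (fun j hj => congrArg a (hin j hj)) (fun j hj => congrArg a (hout j hj))
    exact ⟨_, hβ⟩

end SpectrumAccess

theorem stmt_5_general (N M : ℕ)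
    (𝒩 : Fin (N + 1) → Finset (Fin (N + 1)))
    (hself : ∀ n, n ∉ 𝒩 n)
    (hforest : (stmt5UndirGraph 𝒩).IsAcyclic)
    (θ : Fin (M + 1) → ℝ) (B : Fin (M + 1) → Fin (N + 1) → ℝ)
    (g : Fin (N + 1) → Finset (Fin (N + 1)) → ℝ)
    (hθ : ∀ m, 0 < θ m ∧ θ m < 1)
    (hB : ∀ m n, 0 < B m n)
    -- congestion property:
    (hCP : ∀ n S T, S ⊆ T → T ⊆ 𝒩 n → g n T ≤ g n S)
    (U : (Fin (N + 1) → Fin (M + 1)) → Fin (N + 1) → ℝ)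
    (hU : ∀ a n, U a n = θ (a n) * B (a n) n *
      g n ((𝒩 n).filter (fun i => a i = a n))) :
    ∃ a : Fin (N + 1) → Fin (M + 1), ∀ (n : Fin (N + 1)) (m : Fin (M + 1)),
      U (Function.update a n m) n ≤ U a n := by
  have hf : SpectrumAccess.IsCongested (fun n m S => θ m * B m n * g n S) 𝒩 :=
    fun n m _ _ hST hT =>
      mul_le_mul_of_nonneg_left (hCP n _ _ hST hT) (mul_pos (hθ m).1 (hB m n)).le
  obtain ⟨a, ha⟩ := SpectrumAccess.exists_isNashEquilibrium hself hforest hf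
  refine ⟨a, fun n m => ?_⟩
  rw [hU, hU]
  exact ha n m

/-- Any spatial spectrum access game satisfying the congestion property whose directed
interference graph is a directed forest (the underlying undirected graph is acyclic)
has a pure Nash equilibrium. -/
theorem stmt_5 (N M : ℕ)
    (𝒩 : Fin (N + 1) → Finset (Fin (N + 1)))
    (hself : ∀ n, n ∉ 𝒩 n)
    (hforest : (stmt5UndirGraph 𝒩).IsAcyclic)
    (θ : Fin (M + 1) → ℝ) (B : Fin (M + 1) → Fin (N + 1) → ℝ)
    (g : Fin (N + 1) → Finset (Fin (N + 1)) → ℝ)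
    (hθ : ∀ m, 0 < θ m ∧ θ m < 1)
    (hB : ∀ m n, 0 < B m n)
    (hg : ∀ n S, S ⊆ 𝒩 n → 0 < g n S ∧ g n S < 1)
    -- congestion property:
    (hCP : ∀ n S T, S ⊆ T → T ⊆ 𝒩 n → g n T ≤ g n S)
    (U : (Fin (N + 1) → Fin (M + 1)) → Fin (N + 1) → ℝ)
    (hU : ∀ a n, U a n = θ (a n) * B (a n) n *
      g n ((𝒩 n).filter (fun i => a i = a n))) :
    ∃ a : Fin (N + 1) → Fin (M + 1), ∀ (n : Fin (N + 1)) (m : Fin (M + 1)),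
      U (Function.update a n m) n ≤ U a n :=
  stmt_5_general N M 𝒩 hself hforest θ B g hθ hB hCP U hU
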